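/- arXiv:1305.0944 — 5 statements merged into one kernel-verified Lean document; each statement's English description precedes it below -/
import Mathlib

section
/- Let k be a field and (V, μ, e) a k-vector space with a bilinear multiplication μ : V ⊗ V → V and an element e ∈ V satisfying μ(e ⊗ v) = μ(v ⊗ e) = v for all v ∈ V. Define the linear map σ : V ⊗ V → V ⊗ V by σ(v ⊗ w) = e ⊗ μ(v ⊗ w). Then σ satisfies the Yang–Baxter equation (σ ⊗ id_V)∘(id_V ⊗ σ)∘(σ ⊗ id_V) = (id_V ⊗ σ)∘(σ ⊗ id_V)∘(id_V ⊗ σ) on V ⊗ V ⊗ V if and only if μ is associative, i.e. μ(μ(a ⊗ b) ⊗ c) = μ(a ⊗ μ(b ⊗ c)) for all a, b, c ∈ V. -/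
/-! Both sides of the Yang–Baxter equation send `a ⊗ b ⊗ c` to `e ⊗ e ⊗ x`, with `x = (ab)c` on the
left and `x = a(bc)` on the right once `e` is a right unit. Since `e` is also a left unit,
`μ ∘ (id ⊗ μ)` recovers `x` from `e ⊗ e ⊗ x`, so the two sides agree exactly when `μ` is
associative. -/

open TensorProduct

/-- The colored Yang–Baxter equation on `X ⊗ Y ⊗ Z` for braiding components
`cXY : X ⊗ Y → Y ⊗ X`, `cXZ : X ⊗ Z → Z ⊗ X`, `cYZ : Y ⊗ Z → Z ⊗ Y`:
`(cYZ ⊗ id_X) ∘ (id_Y ⊗ cXZ) ∘ (cXY ⊗ id_Z) = (id_Z ⊗ cXY) ∘ (cXZ ⊗ id_Y) ∘ (id_X ⊗ cYZ)`,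
written with the canonical associators. -/
def ColoredYBE (k : Type*) [CommRing k]
    (X Y Z : Type*) [AddCommGroup X] [Module k X] [AddCommGroup Y] [Module k Y]
    [AddCommGroup Z] [Module k Z]
    (cXY : X ⊗[k] Y →ₗ[k] Y ⊗[k] X) (cXZ : X ⊗[k] Z →ₗ[k] Z ⊗[k] X)
    (cYZ : Y ⊗[k] Z →ₗ[k] Z ⊗[k] Y) : Prop :=
  (TensorProduct.assoc k Z Y X).toLinearMap
      ∘ₗ (cYZ.rTensor X)
      ∘ₗ (TensorProduct.assoc k Y Z X).symm.toLinearMap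
      ∘ₗ (cXZ.lTensor Y)
      ∘ₗ (TensorProduct.assoc k Y X Z).toLinearMap
      ∘ₗ (cXY.rTensor Z)
      ∘ₗ (TensorProduct.assoc k X Y Z).symm.toLinearMap
    = (cXY.lTensor Z)
      ∘ₗ (TensorProduct.assoc k Z X Y).toLinearMap
      ∘ₗ (cXZ.rTensor Y)
      ∘ₗ (TensorProduct.assoc k X Z Y).symm.toLinearMap
      ∘ₗ (cYZ.lTensor X)

section

variable {k V : Type*} [CommRing k] [AddCommGroup V] [Module k V]

theorem coloredYBE_mk_comp_iff (μ : V ⊗[k] V →ₗ[k] V) (e : V) :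
    ColoredYBE k V V V (mk k V V e ∘ₗ μ) (mk k V V e ∘ₗ μ) (mk k V V e ∘ₗ μ) ↔
      ∀ a b c : V, e ⊗ₜ[k] (μ (e ⊗ₜ e) ⊗ₜ[k] μ (μ (a ⊗ₜ b) ⊗ₜ c)) =
        e ⊗ₜ[k] (e ⊗ₜ[k] μ (μ (a ⊗ₜ e) ⊗ₜ μ (b ⊗ₜ c))) := by
  constructor
  · intro h a b c
    simpa using LinearMap.congr_fun h (a ⊗ₜ[k] (b ⊗ₜ[k] c))
  · intro h
    refine ext_threefold' fun a b c => ?_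
    simpa using h a b c

theorem tmul_tmul_injective_of_left_unit {μ : V ⊗[k] V →ₗ[k] V} {e : V}
    (he_left : ∀ v : V, μ (e ⊗ₜ[k] v) = v) :
    Function.Injective fun x : V => e ⊗ₜ[k] (e ⊗ₜ[k] x) :=
  Function.LeftInverse.injective (g := μ ∘ₗ μ.lTensor V) fun x => by simp [he_left]

end

/-- The associativity braiding `σ(v ⊗ w) = e ⊗ μ(v ⊗ w)` satisfies the Yang–Baxter
equation if and only if `μ` is associative. -/
theorem associativity_braiding_ybe_iff_assoc
    (k V : Type*) [Field k] [AddCommGroup V] [Module k V]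
    (μ : V ⊗[k] V →ₗ[k] V) (e : V)
    (he_left : ∀ v : V, μ (e ⊗ₜ[k] v) = v) (he_right : ∀ v : V, μ (v ⊗ₜ[k] e) = v) :
    ColoredYBE k V V V
        ((TensorProduct.mk k V V e) ∘ₗ μ)
        ((TensorProduct.mk k V V e) ∘ₗ μ)
        ((TensorProduct.mk k V V e) ∘ₗ μ)
      ↔ ∀ a b c : V, μ (μ (a ⊗ₜ[k] b) ⊗ₜ[k] c) = μ (a ⊗ₜ[k] μ (b ⊗ₜ[k] c)) := by
  rw [coloredYBE_mk_comp_iff]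
  simp only [he_right]
  exact forall₃_congr fun a b c => (tmul_tmul_injective_of_left_unit he_left).eq_iff
end

section
/- Let k be a field, A a unital associative k-algebra with unit 1, M a k-vector space, and ρ : M ⊗ A → M a linear map satisfying ρ(m ⊗ 1) = m for all m ∈ M. Let σ_Ass : A ⊗ A → A ⊗ A be the linear map a ⊗ b ↦ 1 ⊗ ab. Then the braided module condition ρ∘(ρ ⊗ id_A) = ρ∘(ρ ⊗ id_A)∘(id_M ⊗ σ_Ass) (as maps M ⊗ A ⊗ A → M) holds if and only if ρ is an associative right action, i.e. ρ(ρ(m ⊗ a) ⊗ b) = ρ(m ⊗ ab) for all m ∈ M and a, b ∈ A. -/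
open TensorProduct

section BraidedModule

variable {R A M : Type*} [CommSemiring R] [Semiring A] [Algebra R A] [AddCommMonoid M] [Module R M]

variable (R A) in
def assocBraiding : A ⊗[R] A →ₗ[R] A ⊗[R] A :=
  TensorProduct.mk R A A 1 ∘ₗ LinearMap.mul' R A

@[simp]
theorem assocBraiding_tmul (a b : A) : assocBraiding R A (a ⊗ₜ b) = 1 ⊗ₜ (a * b) := by
  simp [assocBraiding]

def actTwice (ρ : M ⊗[R] A →ₗ[R] M) : M ⊗[R] (A ⊗[R] A) →ₗ[R] M :=
  ρ ∘ₗ ρ.rTensor A ∘ₗ (TensorProduct.assoc R M A A).symm.toLinearMap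

@[simp]
theorem actTwice_tmul (ρ : M ⊗[R] A →ₗ[R] M) (m : M) (a b : A) :
    actTwice ρ (m ⊗ₜ (a ⊗ₜ b)) = ρ (ρ (m ⊗ₜ a) ⊗ₜ b) := rfl

def IsBraidedModule (ρ : M ⊗[R] A →ₗ[R] M) (σ : A ⊗[R] A →ₗ[R] A ⊗[R] A) : Prop :=
  actTwice ρ = actTwice ρ ∘ₗ σ.lTensor M

theorem isBraidedModule_iff_tmul (ρ : M ⊗[R] A →ₗ[R] M) (σ : A ⊗[R] A →ₗ[R] A ⊗[R] A) :
    IsBraidedModule ρ σ ↔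
      ∀ (m : M) (a b : A), ρ (ρ (m ⊗ₜ a) ⊗ₜ b) = actTwice ρ (m ⊗ₜ σ (a ⊗ₜ b)) := by
  refine ⟨fun h m a b => LinearMap.congr_fun h (m ⊗ₜ (a ⊗ₜ b)), fun h => ?_⟩
  ext m a b
  exact h m a b

theorem isBraidedModule_assocBraiding_iff (ρ : M ⊗[R] A →ₗ[R] M)
    (hunit : ∀ m : M, ρ (m ⊗ₜ (1 : A)) = m) :
    IsBraidedModule ρ (assocBraiding R A) ↔
      ∀ (m : M) (a b : A), ρ (ρ (m ⊗ₜ a) ⊗ₜ b) = ρ (m ⊗ₜ (a * b)) := by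
  simp only [isBraidedModule_iff_tmul, assocBraiding_tmul, actTwice_tmul, hunit]

end BraidedModule

/-- For a unital associative algebra `A`, a linear map `ρ : M ⊗ A → M` with `ρ(m ⊗ 1) = m`
satisfies the braided module condition for the associativity braiding
`σ_Ass(a ⊗ b) = 1 ⊗ ab` if and only if it is an associative right action of `A` on `M`. -/
theorem braided_module_iff_assoc_action
    (k A M : Type*) [Field k] [Ring A] [Algebra k A] [AddCommGroup M] [Module k M]
    (ρ : M ⊗[k] A →ₗ[k] M)
    (hunit : ∀ m : M, ρ (m ⊗ₜ[k] (1 : A)) = m) :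
    (ρ ∘ₗ (ρ.rTensor A) ∘ₗ (TensorProduct.assoc k M A A).symm.toLinearMap
        = ρ ∘ₗ (ρ.rTensor A) ∘ₗ (TensorProduct.assoc k M A A).symm.toLinearMap
            ∘ₗ (LinearMap.lTensor M ((TensorProduct.mk k A A 1) ∘ₗ (LinearMap.mul' k A))))
      ↔ ∀ (m : M) (a b : A), ρ (ρ (m ⊗ₜ[k] a) ⊗ₜ[k] b) = ρ (m ⊗ₜ[k] (a * b)) :=
  isBraidedModule_assocBraiding_iff ρ hunit
end

section
/- Let k be a field, A and B unital associative k-algebras, and ξ : A ⊗ B → B ⊗ A a linear map satisfying ξ(1_A ⊗ b) = b ⊗ 1_A and ξ(a ⊗ 1_B) = 1_B ⊗ a for all a ∈ A, b ∈ B. Define a bilinear multiplication on B ⊗ A by (b ⊗ a)(b' ⊗ a') := (μ_B ⊗ μ_A)(b ⊗ ξ(a ⊗ b') ⊗ a'). Then this multiplication is associative (with two-sided unit 1_B ⊗ 1_A) if and only if ξ is natural with respect to both multiplications, i.e. ξ∘(μ_A ⊗ id_B) = (id_B ⊗ μ_A)∘(ξ ⊗ id_A)∘(id_A ⊗ ξ)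 as maps A ⊗ A ⊗ B → B ⊗ A, and ξ∘(id_A ⊗ μ_B) = (μ_B ⊗ id_A)∘(id_B ⊗ ξ)∘(ξ ⊗ id_B) as maps A ⊗ B ⊗ B → B ⊗ A. -/
open TensorProduct

variable (k : Type*) [Field k]

/-- The multiplication of the twisted (braided) tensor product `Q ⊗_ξ P` of two
"algebras" `(P, μP)` and `(Q, μQ)` along a twisting map `ξ : P ⊗ Q → Q ⊗ P`:
`(q ⊗ p)(q' ⊗ p') = (μQ ⊗ μP)(q ⊗ ξ(p ⊗ q') ⊗ p')`. -/
noncomputable def twistMul {P Q : Type*} [AddCommGroup P] [Module k P]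
    [AddCommGroup Q] [Module k Q]
    (μQ : Q ⊗[k] Q →ₗ[k] Q) (μP : P ⊗[k] P →ₗ[k] P)
    (ξ : P ⊗[k] Q →ₗ[k] Q ⊗[k] P) :
    (Q ⊗[k] P) ⊗[k] (Q ⊗[k] P) →ₗ[k] Q ⊗[k] P :=
  (μQ.rTensor P)
    ∘ₗ (TensorProduct.assoc k Q Q P).symm.toLinearMap
    ∘ₗ (LinearMap.lTensor Q
          ((μP.lTensor Q)
            ∘ₗ (TensorProduct.assoc k Q P P).toLinearMap
            ∘ₗ (ξ.rTensor P)
            ∘ₗ (TensorProduct.assoc k P Q P).symm.toLinearMap))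
    ∘ₗ (TensorProduct.assoc k Q P (Q ⊗[k] P)).toLinearMap

/-- Naturality of `ξ : P ⊗ Q → Q ⊗ P` with respect to a multiplication `μP` on `P`:
`ξ ∘ (μP ⊗ id_Q) = (id_Q ⊗ μP) ∘ (ξ ⊗ id_P) ∘ (id_P ⊗ ξ)` on `P ⊗ P ⊗ Q`. -/
def NatFirst {P Q : Type*} [AddCommGroup P] [Module k P] [AddCommGroup Q] [Module k Q]
    (μP : P ⊗[k] P →ₗ[k] P) (ξ : P ⊗[k] Q →ₗ[k] Q ⊗[k] P) : Prop :=
  ξ ∘ₗ (μP.rTensor Q) ∘ₗ (TensorProduct.assoc k P P Q).symm.toLinearMap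
    = (μP.lTensor Q)
      ∘ₗ (TensorProduct.assoc k Q P P).toLinearMap
      ∘ₗ (ξ.rTensor P)
      ∘ₗ (TensorProduct.assoc k P Q P).symm.toLinearMap
      ∘ₗ (ξ.lTensor P)

/-- Naturality of `ξ : P ⊗ Q → Q ⊗ P` with respect to a multiplication `μQ` on `Q`:
`ξ ∘ (id_P ⊗ μQ) = (μQ ⊗ id_P) ∘ (id_Q ⊗ ξ) ∘ (ξ ⊗ id_Q)` on `P ⊗ Q ⊗ Q`. -/
def NatSecond {P Q : Type*} [AddCommGroup P] [Module k P] [AddCommGroup Q] [Module k Q]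
    (μQ : Q ⊗[k] Q →ₗ[k] Q) (ξ : P ⊗[k] Q →ₗ[k] Q ⊗[k] P) : Prop :=
  ξ ∘ₗ (μQ.lTensor P)
    = (μQ.rTensor P)
      ∘ₗ (TensorProduct.assoc k Q Q P).symm.toLinearMap
      ∘ₗ (ξ.lTensor Q)
      ∘ₗ (TensorProduct.assoc k Q P Q).toLinearMap
      ∘ₗ (ξ.rTensor Q)
      ∘ₗ (TensorProduct.assoc k P Q Q).symm.toLinearMap

/-
Write `x * y` for the twisted product on `B ⊗ A`. Without any hypothesis on `ξ`,
`(1 ⊗ a) * y = twistLeft (a ⊗ y)`, `x * (b ⊗ 1) = twistRight (x ⊗ b)` and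
`(1 ⊗ a) * (b ⊗ 1) = ξ (a ⊗ b)`, so the two naturality conditions say exactly that the triples
`(1 ⊗ a, 1 ⊗ a', b ⊗ 1)` and `(1 ⊗ a, b ⊗ 1, b' ⊗ 1)` associate; this gives one direction.
Conversely, naturality makes the triples `(x, 1 ⊗ a, b ⊗ 1)` and `(1 ⊗ a, b ⊗ 1, y)` associate.
Since `(b ⊗ a) * y = b · ((1 ⊗ a) * y)` and `x * (b ⊗ a) = (x * (b ⊗ 1)) · a`, both bracketings of
`(b ⊗ a) * (b' ⊗ a') * (b'' ⊗ a'')` then reduce to `b · (ξ (a ⊗ b') * ξ (a' ⊗ b'')) · a''`.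
-/

section

variable {R S M : Type*} [CommSemiring R] [Semiring S] [Algebra R S] [AddCommMonoid M] [Module R M]

theorem rTensor_mul'_assoc_symm_tmul (s : S) (z : S ⊗[R] M) :
    (LinearMap.mul' R S).rTensor M ((TensorProduct.assoc R S S M).symm (s ⊗ₜ z))
      = (LinearMap.mulLeft R s).rTensor M z := by
  induction z using TensorProduct.induction_on with
  | zero => simp
  | tmul t m => simp
  | add u v hu hv => simp_all [tmul_add]

theorem lTensor_mul'_assoc_tmul (z : M ⊗[R] S) (s : S) :
    (LinearMap.mul' R S).lTensor M (TensorProduct.assoc R M S S (z ⊗ₜ s))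
      = (LinearMap.mulRight R s).lTensor M z := by
  induction z using TensorProduct.induction_on with
  | zero => simp
  | tmul m t => simp
  | add u v hu hv => simp_all [add_tmul]

theorem rTensor_lTensor_comm_apply {N P P' : Type*} [AddCommMonoid N] [Module R N]
    [AddCommMonoid P] [Module R P] [AddCommMonoid P'] [Module R P'] (f : M →ₗ[R] N)
    (g : P →ₗ[R] P') (x : M ⊗[R] P) :
    f.rTensor P' (g.lTensor M x) = g.lTensor N (f.rTensor P x) := by
  rw [← LinearMap.comp_apply, ← LinearMap.comp_apply, LinearMap.rTensor_comp_lTensor,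
    LinearMap.lTensor_comp_rTensor]

end

-- `twistMul = (μQ ⊗ id) ∘ (id_Q ⊗ twistLeft)`, and `NatFirst` reads
-- `ξ ∘ (μP ⊗ id) = twistLeft ∘ (id_P ⊗ ξ)`; dually for `twistRight` and `NatSecond`.
noncomputable def twistLeft {P Q : Type*} [AddCommGroup P] [Module k P]
    [AddCommGroup Q] [Module k Q]
    (μP : P ⊗[k] P →ₗ[k] P) (ξ : P ⊗[k] Q →ₗ[k] Q ⊗[k] P) :
    P ⊗[k] (Q ⊗[k] P) →ₗ[k] Q ⊗[k] P :=
  (μP.lTensor Q)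
    ∘ₗ (TensorProduct.assoc k Q P P).toLinearMap
    ∘ₗ (ξ.rTensor P)
    ∘ₗ (TensorProduct.assoc k P Q P).symm.toLinearMap

noncomputable def twistRight {P Q : Type*} [AddCommGroup P] [Module k P]
    [AddCommGroup Q] [Module k Q]
    (μQ : Q ⊗[k] Q →ₗ[k] Q) (ξ : P ⊗[k] Q →ₗ[k] Q ⊗[k] P) :
    (Q ⊗[k] P) ⊗[k] Q →ₗ[k] Q ⊗[k] P :=
  (μQ.rTensor P)
    ∘ₗ (TensorProduct.assoc k Q Q P).symm.toLinearMap
    ∘ₗ (ξ.lTensor Q)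
    ∘ₗ (TensorProduct.assoc k Q P Q).toLinearMap

section Twisting

variable {k} {P Q : Type*} [AddCommGroup P] [Module k P] [AddCommGroup Q] [Module k Q]
  {ξ : P ⊗[k] Q →ₗ[k] Q ⊗[k] P}

theorem natFirst_iff_twistLeft (μP : P ⊗[k] P →ₗ[k] P) :
    NatFirst k μP ξ ↔
      ∀ (p p' : P) (q : Q), ξ (μP (p ⊗ₜ p') ⊗ₜ q) = twistLeft k μP ξ (p ⊗ₜ ξ (p' ⊗ₜ q)) := by
  refine ⟨fun h p p' q => LinearMap.congr_fun h (p ⊗ₜ (p' ⊗ₜ q)), fun h => ?_⟩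
  ext p p' q
  exact h p p' q

theorem natSecond_iff_twistRight (μQ : Q ⊗[k] Q →ₗ[k] Q) :
    NatSecond k μQ ξ ↔
      ∀ (p : P) (q q' : Q), ξ (p ⊗ₜ μQ (q ⊗ₜ q')) = twistRight k μQ ξ (ξ (p ⊗ₜ q) ⊗ₜ q') := by
  refine ⟨fun h p q q' => LinearMap.congr_fun h (p ⊗ₜ (q ⊗ₜ q')), fun h => ?_⟩
  ext p q q'
  exact h p q q'

end Twisting

section TwistedAlgebra

variable {k} {A B : Type*} [Ring A] [Algebra k A] [Ring B] [Algebra k B]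
  {ξ : A ⊗[k] B →ₗ[k] B ⊗[k] A}

local notation "μ" => twistMul k (LinearMap.mul' k B) (LinearMap.mul' k A) ξ
local notation "Φ" => twistLeft k (LinearMap.mul' k A) ξ
local notation "Ψ" => twistRight k (LinearMap.mul' k B) ξ

theorem twistLeft_tmul (a : A) (b : B) (a' : A) :
    Φ (a ⊗ₜ[k] (b ⊗ₜ[k] a')) = (LinearMap.mulRight k a').lTensor B (ξ (a ⊗ₜ[k] b)) := by
  simp [twistLeft, lTensor_mul'_assoc_tmul]

theorem twistRight_tmul (b : B) (a : A) (b' : B) :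
    Ψ ((b ⊗ₜ[k] a) ⊗ₜ[k] b') = (LinearMap.mulLeft k b).rTensor A (ξ (a ⊗ₜ[k] b')) := by
  simp [twistRight, rTensor_mul'_assoc_symm_tmul]

theorem twistMul_tmul_left (b : B) (a : A) (y : B ⊗[k] A) :
    μ ((b ⊗ₜ[k] a) ⊗ₜ[k] y) = (LinearMap.mulLeft k b).rTensor A (Φ (a ⊗ₜ[k] y)) :=
  rTensor_mul'_assoc_symm_tmul b _

theorem twistMul_tmul_right (x : B ⊗[k] A) (b : B) (a : A) :
    μ (x ⊗ₜ[k] (b ⊗ₜ[k] a)) = (LinearMap.mulRight k a).lTensor B (Ψ (x ⊗ₜ[k] b)) := by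
  induction x using TensorProduct.induction_on with
  | zero => simp
  | tmul c d =>
    rw [twistMul_tmul_left, twistLeft_tmul, twistRight_tmul, rTensor_lTensor_comm_apply]
  | add u v hu hv => simp_all [add_tmul]

theorem twistMul_one_tmul (a : A) (y : B ⊗[k] A) : μ ((1 ⊗ₜ[k] a) ⊗ₜ[k] y) = Φ (a ⊗ₜ[k] y) := by
  rw [twistMul_tmul_left, LinearMap.mulLeft_one, LinearMap.rTensor_id_apply]

theorem twistMul_tmul_one (x : B ⊗[k] A) (b : B) : μ (x ⊗ₜ[k] (b ⊗ₜ[k] 1)) = Ψ (x ⊗ₜ[k] b) := by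
  rw [twistMul_tmul_right, LinearMap.mulRight_one, LinearMap.lTensor_id_apply]

theorem twistMul_one_tmul_tmul_one (a : A) (b : B) :
    μ ((1 ⊗ₜ[k] a) ⊗ₜ[k] (b ⊗ₜ[k] 1)) = ξ (a ⊗ₜ[k] b) := by
  rw [twistMul_one_tmul, twistLeft_tmul, LinearMap.mulRight_one, LinearMap.lTensor_id_apply]

theorem twistRight_rTensor_mulLeft_tmul (c : B) (x : B ⊗[k] A) (b : B) :
    Ψ ((LinearMap.mulLeft k c).rTensor A x ⊗ₜ[k] b)
      = (LinearMap.mulLeft k c).rTensor A (Ψ (x ⊗ₜ[k] b)) := by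
  induction x using TensorProduct.induction_on with
  | zero => simp
  | tmul c' d =>
    simp only [LinearMap.rTensor_tmul, twistRight_tmul, LinearMap.mulLeft_apply,
      LinearMap.mulLeft_mul, LinearMap.rTensor_comp_apply]
  | add u v hu hv => simp_all [add_tmul]

theorem twistLeft_tmul_lTensor_mulRight (a : A) (y : B ⊗[k] A) (d : A) :
    Φ (a ⊗ₜ[k] (LinearMap.mulRight k d).lTensor B y)
      = (LinearMap.mulRight k d).lTensor B (Φ (a ⊗ₜ[k] y)) := by
  induction y using TensorProduct.induction_on with
  | zero => simp
  | tmul c d' =>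
    simp only [LinearMap.lTensor_tmul, twistLeft_tmul, LinearMap.mulRight_apply,
      LinearMap.mulRight_mul, LinearMap.lTensor_comp_apply]
  | add u v hu hv => simp_all [tmul_add]

theorem twistRight_lTensor_mulRight_tmul (hξ : NatFirst k (LinearMap.mul' k A) ξ)
    (x : B ⊗[k] A) (a : A) (b : B) :
    Ψ ((LinearMap.mulRight k a).lTensor B x ⊗ₜ[k] b) = μ (x ⊗ₜ[k] ξ (a ⊗ₜ[k] b)) := by
  induction x using TensorProduct.induction_on with
  | zero => simp
  | tmul c d =>
    have hnat := (natFirst_iff_twistLeft _).1 hξ d a b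
    rw [LinearMap.mul'_apply] at hnat
    rw [LinearMap.lTensor_tmul, LinearMap.mulRight_apply, twistRight_tmul, hnat,
      twistMul_tmul_left]
  | add u v hu hv => simp_all [add_tmul]

theorem twistLeft_tmul_rTensor_mulLeft (hξ : NatSecond k (LinearMap.mul' k B) ξ)
    (a : A) (b : B) (y : B ⊗[k] A) :
    Φ (a ⊗ₜ[k] (LinearMap.mulLeft k b).rTensor A y) = μ (ξ (a ⊗ₜ[k] b) ⊗ₜ[k] y) := by
  induction y using TensorProduct.induction_on with
  | zero => simp
  | tmul c d =>
    have hnat := (natSecond_iff_twistRight _).1 hξ a b c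
    rw [LinearMap.mul'_apply] at hnat
    rw [LinearMap.rTensor_tmul, LinearMap.mulLeft_apply, twistLeft_tmul, hnat,
      twistMul_tmul_right]
  | add u v hu hv => simp_all [tmul_add]

theorem twistMul_assoc_of_natFirst_of_natSecond (h₁ : NatFirst k (LinearMap.mul' k A) ξ)
    (h₂ : NatSecond k (LinearMap.mul' k B) ξ) :
    μ ∘ₗ LinearMap.rTensor (B ⊗[k] A) μ = μ ∘ₗ LinearMap.lTensor (B ⊗[k] A) μ
      ∘ₗ (TensorProduct.assoc k (B ⊗[k] A) (B ⊗[k] A) (B ⊗[k] A)).toLinearMap := by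
  ext b a b' a' b'' a''
  simp only [AlgebraTensorModule.curry_apply, TensorProduct.curry_apply,
    LinearMap.coe_restrictScalars, LinearMap.comp_apply, LinearMap.rTensor_tmul,
    LinearMap.lTensor_tmul, LinearEquiv.coe_coe, assoc_tmul]
  rw [twistMul_tmul_left b a (b' ⊗ₜ a'), twistLeft_tmul, twistMul_tmul_right _ b'' a'',
    twistRight_rTensor_mulLeft_tmul, twistRight_lTensor_mulRight_tmul h₁,
    twistMul_tmul_right _ b'' a'', twistRight_tmul, twistMul_tmul_left b a,
    twistLeft_tmul_lTensor_mulRight, twistLeft_tmul_rTensor_mulLeft h₂,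
    rTensor_lTensor_comm_apply]

theorem twistLeft_one_tmul (hξ : ∀ b : B, ξ ((1 : A) ⊗ₜ[k] b) = b ⊗ₜ[k] (1 : A))
    (y : B ⊗[k] A) : Φ (1 ⊗ₜ[k] y) = y := by
  induction y using TensorProduct.induction_on with
  | zero => simp
  | tmul b a => rw [twistLeft_tmul, hξ, LinearMap.lTensor_tmul, LinearMap.mulRight_apply, one_mul]
  | add u v hu hv => simp_all [tmul_add]

theorem twistRight_tmul_one (hξ : ∀ a : A, ξ (a ⊗ₜ[k] (1 : B)) = (1 : B) ⊗ₜ[k] a)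
    (x : B ⊗[k] A) : Ψ (x ⊗ₜ[k] 1) = x := by
  induction x using TensorProduct.induction_on with
  | zero => simp
  | tmul b a => rw [twistRight_tmul, hξ, LinearMap.rTensor_tmul, LinearMap.mulLeft_apply, mul_one]
  | add u v hu hv => simp_all [add_tmul]

theorem natFirst_of_twistMul_assoc (hξ : ∀ a : A, ξ (a ⊗ₜ[k] (1 : B)) = (1 : B) ⊗ₜ[k] a)
    (h : ∀ u v w : B ⊗[k] A, μ (μ (u ⊗ₜ v) ⊗ₜ w) = μ (u ⊗ₜ μ (v ⊗ₜ w))) :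
    NatFirst k (LinearMap.mul' k A) ξ := by
  refine (natFirst_iff_twistLeft _).2 fun a a' b => ?_
  have hmul : μ ((1 ⊗ₜ[k] a) ⊗ₜ[k] (1 ⊗ₜ[k] a')) = 1 ⊗ₜ[k] (a * a') := by
    rw [twistMul_tmul_right, twistRight_tmul_one hξ, LinearMap.lTensor_tmul,
      LinearMap.mulRight_apply]
  calc ξ (LinearMap.mul' k A (a ⊗ₜ a') ⊗ₜ b)
      = μ (μ ((1 ⊗ₜ[k] a) ⊗ₜ[k] (1 ⊗ₜ[k] a')) ⊗ₜ[k] (b ⊗ₜ[k] 1)) := by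
        rw [hmul, twistMul_one_tmul_tmul_one, LinearMap.mul'_apply]
    _ = μ ((1 ⊗ₜ[k] a) ⊗ₜ[k] μ ((1 ⊗ₜ[k] a') ⊗ₜ[k] (b ⊗ₜ[k] 1))) := h _ _ _
    _ = Φ (a ⊗ₜ ξ (a' ⊗ₜ b)) := by rw [twistMul_one_tmul_tmul_one, twistMul_one_tmul]

theorem natSecond_of_twistMul_assoc (hξ : ∀ b : B, ξ ((1 : A) ⊗ₜ[k] b) = b ⊗ₜ[k] (1 : A))
    (h : ∀ u v w : B ⊗[k] A, μ (μ (u ⊗ₜ v) ⊗ₜ w) = μ (u ⊗ₜ μ (v ⊗ₜ w))) :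
    NatSecond k (LinearMap.mul' k B) ξ := by
  refine (natSecond_iff_twistRight _).2 fun a b b' => ?_
  have hmul : μ ((b ⊗ₜ[k] 1) ⊗ₜ[k] (b' ⊗ₜ[k] 1)) = (b * b') ⊗ₜ[k] 1 := by
    rw [twistMul_tmul_left, twistLeft_one_tmul hξ, LinearMap.rTensor_tmul,
      LinearMap.mulLeft_apply]
  calc ξ (a ⊗ₜ LinearMap.mul' k B (b ⊗ₜ b'))
      = μ ((1 ⊗ₜ[k] a) ⊗ₜ[k] μ ((b ⊗ₜ[k] 1) ⊗ₜ[k] (b' ⊗ₜ[k] 1))) := by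
        rw [hmul, twistMul_one_tmul_tmul_one, LinearMap.mul'_apply]
    _ = μ (μ ((1 ⊗ₜ[k] a) ⊗ₜ[k] (b ⊗ₜ[k] 1)) ⊗ₜ[k] (b' ⊗ₜ[k] 1)) := (h _ _ _).symm
    _ = Ψ (ξ (a ⊗ₜ b) ⊗ₜ b') := by rw [twistMul_one_tmul_tmul_one, twistMul_tmul_one]

end TwistedAlgebra

/-- The twisted tensor product multiplication on `B ⊗ A` is associative (with two-sided
unit `1_B ⊗ 1_A`) if and only if `ξ` is natural with respect to both multiplications. -/
theorem twisted_tensor_product_assoc_iff_natural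
    (A B : Type*) [Ring A] [Algebra k A] [Ring B] [Algebra k B]
    (ξ : A ⊗[k] B →ₗ[k] B ⊗[k] A)
    (hξB : ∀ b : B, ξ ((1 : A) ⊗ₜ[k] b) = b ⊗ₜ[k] (1 : A))
    (hξA : ∀ a : A, ξ (a ⊗ₜ[k] (1 : B)) = (1 : B) ⊗ₜ[k] a) :
    ((twistMul k (LinearMap.mul' k B) (LinearMap.mul' k A) ξ
          ∘ₗ (twistMul k (LinearMap.mul' k B) (LinearMap.mul' k A) ξ).rTensor (B ⊗[k] A)
        = twistMul k (LinearMap.mul' k B) (LinearMap.mul' k A) ξ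
          ∘ₗ (twistMul k (LinearMap.mul' k B) (LinearMap.mul' k A) ξ).lTensor (B ⊗[k] A)
          ∘ₗ (TensorProduct.assoc k (B ⊗[k] A) (B ⊗[k] A) (B ⊗[k] A)).toLinearMap)
      ∧ (∀ x : B ⊗[k] A,
          twistMul k (LinearMap.mul' k B) (LinearMap.mul' k A) ξ
            (((1 : B) ⊗ₜ[k] (1 : A)) ⊗ₜ[k] x) = x)
      ∧ (∀ x : B ⊗[k] A,
          twistMul k (LinearMap.mul' k B) (LinearMap.mul' k A) ξ
            (x ⊗ₜ[k] ((1 : B) ⊗ₜ[k] (1 : A))) = x))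
    ↔ (NatFirst k (LinearMap.mul' k A) ξ ∧ NatSecond k (LinearMap.mul' k B) ξ) := by
  constructor
  · rintro ⟨hassoc, -, -⟩
    have h : ∀ u v w : B ⊗[k] A,
        twistMul k (LinearMap.mul' k B) (LinearMap.mul' k A) ξ
            (twistMul k (LinearMap.mul' k B) (LinearMap.mul' k A) ξ (u ⊗ₜ v) ⊗ₜ w)
          = twistMul k (LinearMap.mul' k B) (LinearMap.mul' k A) ξ
            (u ⊗ₜ twistMul k (LinearMap.mul' k B) (LinearMap.mul' k A) ξ (v ⊗ₜ w)) :=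
      fun u v w => by simpa using LinearMap.congr_fun hassoc ((u ⊗ₜ v) ⊗ₜ w)
    exact ⟨natFirst_of_twistMul_assoc hξA h, natSecond_of_twistMul_assoc hξB h⟩
  · rintro ⟨h₁, h₂⟩
    refine ⟨twistMul_assoc_of_natFirst_of_natSecond h₁ h₂, fun x => ?_, fun x => ?_⟩
    · rw [twistMul_one_tmul, twistLeft_one_tmul hξB]
    · rw [twistMul_tmul_one, twistRight_tmul_one hξA]
end

section
/- Let k be a field, A and B unital associative k-algebras, and ξ : A ⊗ B → B ⊗ A a bijective linear map with ξ(1_A ⊗ b) = b ⊗ 1_A, ξ(a ⊗ 1_B) = 1_B ⊗ a, ξ∘(μ_A ⊗ id_B) = (id_B ⊗ μ_A)∘(ξ ⊗ id_A)∘(id_A ⊗ ξ) and ξ∘(id_A ⊗ μ_B) = (μ_B ⊗ id_A)∘(id_B ⊗ ξ)∘(ξ ⊗ id_B). Then the inverse map ξ⁻¹ : B ⊗ A → A ⊗ B satisfies the analogous conditions with the roles of A and B interchanged (so that the twisted tensor product A ⊗_{ξ⁻¹} B is also a unital associative algebra), and ξ⁻¹ is an algebra isomorphism from B ⊗_ξ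 A to A ⊗_{ξ⁻¹} B. -/
/-!
The naturality conditions for `ξ⁻¹` are those of `ξ` (with the roles swapped), composed with
`ξ⁻¹` on the left and with the inverse of the right-hand side chain on the right.

Multiplicativity is proved for `ξ : A ⊗_{ξ⁻¹} B → B ⊗_ξ A`. Writing `·` for the product of
`B ⊗_ξ A`, the two naturality conditions say `ξ (a a' ⊗ b) = (1 ⊗ a) · ξ (a' ⊗ b)` and
`ξ (a ⊗ b b') = ξ (a ⊗ b) · (b' ⊗ 1)`. Hence, if `ξ⁻¹ (b ⊗ a') = ∑ x ⊗ y`,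
`ξ ((a ⊗ b)(a' ⊗ b')) = ∑ ξ (a x ⊗ y b') = (1 ⊗ a) · ((b ⊗ a') · (b' ⊗ 1))`, and one more use of
the second condition turns this into `ξ (a ⊗ b) · ξ (a' ⊗ b')`; associativity of `B ⊗_ξ A` is
never needed.
-/

open TensorProduct

variable (k : Type*) [Field k]

section Inverse

variable {k} {P Q : Type*} [AddCommGroup P] [Module k P] [AddCommGroup Q] [Module k Q]

theorem NatSecond.symm {μ : Q ⊗[k] Q →ₗ[k] Q} {ξ : P ⊗[k] Q ≃ₗ[k] Q ⊗[k] P}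
    (h : NatSecond k μ ξ.toLinearMap) : NatFirst k μ ξ.symm.toLinearMap := by
  refine LinearMap.ext fun x => ξ.injective ?_
  simpa [← LinearMap.rTensor_comp_apply, ← LinearMap.lTensor_comp_apply] using
    (LinearMap.congr_fun h ((TensorProduct.assoc k P Q Q) (ξ.symm.toLinearMap.rTensor Q
      ((TensorProduct.assoc k Q P Q).symm (ξ.symm.toLinearMap.lTensor Q x))))).symm

theorem NatFirst.symm {μ : P ⊗[k] P →ₗ[k] P} {ξ : P ⊗[k] Q ≃ₗ[k] Q ⊗[k] P}
    (h : NatFirst k μ ξ.toLinearMap) : NatSecond k μ ξ.symm.toLinearMap := by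
  refine LinearMap.ext fun x => ξ.injective ?_
  simpa [← LinearMap.rTensor_comp_apply, ← LinearMap.lTensor_comp_apply] using
    (LinearMap.congr_fun h (ξ.symm.toLinearMap.lTensor P ((TensorProduct.assoc k P Q P)
      (ξ.symm.toLinearMap.rTensor P ((TensorProduct.assoc k Q P P).symm x))))).symm

end Inverse

section Multiplication

open LinearMap

variable {R M A : Type*} [CommSemiring R] [AddCommMonoid M] [Module R M] [Semiring A]
  [Algebra R A]

theorem lTensor_mul'_assoc_tmul_s5 (w : M ⊗[R] A) (a : A) :
    (mul' R A).lTensor M (TensorProduct.assoc R M A A (w ⊗ₜ a)) = (mulRight R a).lTensor M w := by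
  induction w using TensorProduct.induction_on with
  | zero => simp
  | tmul x y => simp
  | add x y hx hy => simp_all [add_tmul]

theorem rTensor_mul'_assoc_symm_tmul_s5 (a : A) (w : A ⊗[R] M) :
    (mul' R A).rTensor M ((TensorProduct.assoc R A A M).symm (a ⊗ₜ w)) =
      (mulLeft R a).rTensor M w := by
  induction w using TensorProduct.induction_on with
  | zero => simp
  | tmul x y => simp
  | add x y hx hy => simp_all [tmul_add]

end Multiplication

section TwistedTensor

open LinearMap

variable {k} {P Q : Type*} [Ring P] [Algebra k P] [Ring Q] [Algebra k Q]

variable (ξ : P ⊗[k] Q →ₗ[k] Q ⊗[k] P)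

local notation "m" => twistMul k (mul' k Q) (mul' k P)

theorem twistMul_tmul (q q' : Q) (p p' : P) :
    m ξ ((q ⊗ₜ p) ⊗ₜ (q' ⊗ₜ p')) = map (mulLeft k q) (mulRight k p') (ξ (p ⊗ₜ q')) := by
  simp only [twistMul, coe_comp, LinearEquiv.coe_coe, Function.comp_apply, assoc_tmul,
    lTensor_tmul, assoc_symm_tmul, rTensor_tmul, lTensor_mul'_assoc_tmul_s5,
    rTensor_mul'_assoc_symm_tmul_s5]
  rw [← comp_apply, rTensor_comp_lTensor]

theorem twistMul_one_tmul_s5 (p p' : P) (q : Q) :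
    m ξ ((1 ⊗ₜ p) ⊗ₜ (q ⊗ₜ p')) = (mulRight k p').lTensor Q (ξ (p ⊗ₜ q)) := by
  simp [twistMul_tmul, LinearMap.lTensor]

theorem twistMul_tmul_tmul_one (q q' : Q) (p : P) :
    m ξ ((q ⊗ₜ p) ⊗ₜ (q' ⊗ₜ 1)) = (mulLeft k q).rTensor P (ξ (p ⊗ₜ q')) := by
  simp [twistMul_tmul, LinearMap.rTensor]

theorem lTensor_mulRight_twistMul (z : Q ⊗[k] P) (q : Q) (p : P) :
    (mulRight k p).lTensor Q (m ξ (z ⊗ₜ (q ⊗ₜ 1))) = m ξ (z ⊗ₜ (q ⊗ₜ p)) := by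
  induction z using TensorProduct.induction_on with
  | zero => simp
  | tmul x y =>
    rw [twistMul_tmul_tmul_one, twistMul_tmul, ← LinearMap.comp_apply, lTensor_comp_rTensor]
  | add x y hx hy => simp_all [add_tmul]

theorem twistMul_one_tmul' (p : P) (z : Q ⊗[k] P) :
    m ξ ((1 ⊗ₜ p) ⊗ₜ z) = (mul' k P).lTensor Q (TensorProduct.assoc k Q P P
      (ξ.rTensor P ((TensorProduct.assoc k P Q P).symm (p ⊗ₜ z)))) := by
  induction z using TensorProduct.induction_on with
  | zero => simp
  | tmul x y => simp [lTensor_mul'_assoc_tmul_s5, twistMul_one_tmul_s5]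
  | add x y hx hy => simp_all [tmul_add]

theorem twistMul_tmul_tmul_one' (z : Q ⊗[k] P) (q : Q) :
    m ξ (z ⊗ₜ (q ⊗ₜ 1)) = (mul' k Q).rTensor P ((TensorProduct.assoc k Q Q P).symm
      (ξ.lTensor Q (TensorProduct.assoc k Q P Q (z ⊗ₜ q)))) := by
  induction z using TensorProduct.induction_on with
  | zero => simp
  | tmul x y => simp [rTensor_mul'_assoc_symm_tmul_s5, twistMul_tmul_tmul_one]
  | add x y hx hy => simp_all [add_tmul]

variable {ξ}

theorem NatFirst.apply_mul_tmul (h : NatFirst k (mul' k P) ξ) (p p' : P) (q : Q) :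
    ξ ((p * p') ⊗ₜ q) = m ξ ((1 ⊗ₜ p) ⊗ₜ ξ (p' ⊗ₜ q)) := by
  simpa [twistMul_one_tmul'] using LinearMap.congr_fun h (p ⊗ₜ (p' ⊗ₜ q))

theorem NatSecond.apply_tmul_mul (h : NatSecond k (mul' k Q) ξ) (p : P) (q q' : Q) :
    ξ (p ⊗ₜ (q * q')) = m ξ (ξ (p ⊗ₜ q) ⊗ₜ (q' ⊗ₜ 1)) := by
  simpa [twistMul_tmul_tmul_one'] using LinearMap.congr_fun h (p ⊗ₜ (q ⊗ₜ q'))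

theorem apply_map_mulLeft_mulRight (hP : NatFirst k (mul' k P) ξ)
    (hQ : NatSecond k (mul' k Q) ξ) (p : P) (q : Q) (w : P ⊗[k] Q) :
    ξ (map (mulLeft k p) (mulRight k q) w) = m ξ ((1 ⊗ₜ p) ⊗ₜ m ξ (ξ w ⊗ₜ (q ⊗ₜ 1))) := by
  induction w using TensorProduct.induction_on with
  | zero => simp
  | tmul x y =>
    rw [map_tmul, mulLeft_apply, mulRight_apply, hP.apply_mul_tmul, hQ.apply_tmul_mul]
  | add x y hx hy => simp_all [tmul_add, add_tmul]

theorem twistMul_one_tmul_rTensor_mulLeft (h : NatSecond k (mul' k Q) ξ) (p : P) (q : Q)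
    (z : Q ⊗[k] P) :
    m ξ ((1 ⊗ₜ p) ⊗ₜ (mulLeft k q).rTensor P z) = m ξ (ξ (p ⊗ₜ q) ⊗ₜ z) := by
  induction z using TensorProduct.induction_on with
  | zero => simp
  | tmul x y =>
    rw [rTensor_tmul, mulLeft_apply, twistMul_one_tmul_s5, h.apply_tmul_mul,
      lTensor_mulRight_twistMul]
  | add x y hx hy => simp_all [tmul_add]

theorem comp_twistMul_symm {ξ : P ⊗[k] Q ≃ₗ[k] Q ⊗[k] P} (hP : NatFirst k (mul' k P) ξ.toLinearMap)
    (hQ : NatSecond k (mul' k Q) ξ.toLinearMap) :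
    ξ.toLinearMap ∘ₗ twistMul k (mul' k P) (mul' k Q) ξ.symm.toLinearMap =
      m ξ.toLinearMap ∘ₗ map ξ.toLinearMap ξ.toLinearMap := by
  refine TensorProduct.ext_fourfold' fun p q p' q' => ?_
  rw [comp_apply, twistMul_tmul, apply_map_mulLeft_mulRight hP hQ]
  simp only [LinearEquiv.coe_coe, LinearEquiv.apply_symm_apply, twistMul_tmul_tmul_one,
    twistMul_one_tmul_rTensor_mulLeft hQ, comp_apply, map_tmul]

theorem symm_comp_twistMul {ξ : P ⊗[k] Q ≃ₗ[k] Q ⊗[k] P} (hP : NatFirst k (mul' k P) ξ.toLinearMap)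
    (hQ : NatSecond k (mul' k Q) ξ.toLinearMap) :
    ξ.symm.toLinearMap ∘ₗ m ξ.toLinearMap =
      twistMul k (mul' k P) (mul' k Q) ξ.symm.toLinearMap ∘ₗ
        map ξ.symm.toLinearMap ξ.symm.toLinearMap := by
  rw [LinearEquiv.toLinearMap_symm_comp_eq, ← comp_assoc, comp_twistMul_symm hP hQ, comp_assoc,
    ← map_comp]
  simp

end TwistedTensor

/-- If `ξ : A ⊗ B ≃ B ⊗ A` is a bijective twisting map for the algebras `A` and `B`, then
`ξ⁻¹ : B ⊗ A → A ⊗ B` satisfies the analogous unit and naturality conditions with the roles of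
`A` and `B` interchanged, and `ξ⁻¹` is an algebra isomorphism `B ⊗_ξ A → A ⊗_{ξ⁻¹} B`. -/
theorem inverse_twisting_map_and_algebra_iso
    (A B : Type*) [Ring A] [Algebra k A] [Ring B] [Algebra k B]
    (ξ : A ⊗[k] B ≃ₗ[k] B ⊗[k] A)
    (hξB : ∀ b : B, ξ ((1 : A) ⊗ₜ[k] b) = b ⊗ₜ[k] (1 : A))
    (hξA : ∀ a : A, ξ (a ⊗ₜ[k] (1 : B)) = (1 : B) ⊗ₜ[k] a)
    (hnatA : NatFirst k (LinearMap.mul' k A) ξ.toLinearMap)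
    (hnatB : NatSecond k (LinearMap.mul' k B) ξ.toLinearMap) :
    (∀ a : A, ξ.symm ((1 : B) ⊗ₜ[k] a) = a ⊗ₜ[k] (1 : B))
    ∧ (∀ b : B, ξ.symm (b ⊗ₜ[k] (1 : A)) = (1 : A) ⊗ₜ[k] b)
    ∧ NatFirst k (LinearMap.mul' k B) ξ.symm.toLinearMap
    ∧ NatSecond k (LinearMap.mul' k A) ξ.symm.toLinearMap
    ∧ ξ.symm ((1 : B) ⊗ₜ[k] (1 : A)) = (1 : A) ⊗ₜ[k] (1 : B)
    ∧ ξ.symm.toLinearMap ∘ₗ twistMul k (LinearMap.mul' k B) (LinearMap.mul' k A) ξ.toLinearMap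
      = twistMul k (LinearMap.mul' k A) (LinearMap.mul' k B) ξ.symm.toLinearMap
        ∘ₗ (TensorProduct.map ξ.symm.toLinearMap ξ.symm.toLinearMap) := by
  refine ⟨fun a => ?_, fun b => ?_, hnatB.symm, hnatA.symm, ?_, symm_comp_twistMul hnatA hnatB⟩
  · rw [LinearEquiv.symm_apply_eq, hξA]
  · rw [LinearEquiv.symm_apply_eq, hξB]
  · rw [LinearEquiv.symm_apply_eq, hξA]
end

section
/- Let k be a field and H a bialgebra over k with comultiplication Δ(h) = Σ h_{(1)} ⊗ h_{(2)}, counit ε, and dual space H*. Endow H* with the multiplication (l * l')(x) := Σ l(x_{(2)}) l'(x_{(1)}) (which is associative with unit ε). Define a bilinear multiplication on H* ⊗ H by (l ⊗ h)(l' ⊗ h') := Σ_{(h)} (l * (x ↦ l'(x·h_{(2)}))) ⊗ h_{(1)}h'. Then this multiplication is associative with two-sided unit ε ⊗ 1; the resulting unital associative algebra is the Heisenberg-double-type braided tensor product H* ⊗_{σ_bi} H. -/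
open TensorProduct

variable (k : Type*) [Field k]

variable (H : Type*) [Ring H] [Bialgebra k H]

/-- The bilinear contraction `H ⊗ H* → H*`, `h ⊗ l ↦ (x ↦ l (x * h))`. -/
noncomputable def rightMulDual : H ⊗[k] Module.Dual k H →ₗ[k] Module.Dual k H :=
  TensorProduct.lift
    ((LinearMap.llcomp k H H k).flip ∘ₗ (LinearMap.mul k H).flip)

/-- The braiding `σ_bi : H ⊗ H* → H* ⊗ H`,
`h ⊗ l ↦ Σ (x ↦ l (x · h₍₂₎)) ⊗ h₍₁₎` (Sweedler notation). -/
noncomputable def sigmaBi : H ⊗[k] Module.Dual k H →ₗ[k] Module.Dual k H ⊗[k] H :=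
  (TensorProduct.comm k H (Module.Dual k H)).toLinearMap
    ∘ₗ (LinearMap.lTensor H (rightMulDual k H))
    ∘ₗ (TensorProduct.assoc k H H (Module.Dual k H)).toLinearMap
    ∘ₗ ((Coalgebra.comul (R := k) (A := H)).rTensor (Module.Dual k H))

/-- The convolution-type multiplication on `H*` dual to `Δ` via the rainbow pairing:
`(l * l')(x) = Σ l(x₍₂₎) l'(x₍₁₎)`. -/
noncomputable def convMul : Module.Dual k H ⊗[k] Module.Dual k H →ₗ[k] Module.Dual k H :=
  (LinearMap.llcomp k H (k ⊗[k] k) k (LinearMap.mul' k k))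
    ∘ₗ (LinearMap.lcomp k (k ⊗[k] k) (Coalgebra.comul (R := k) (A := H)))
    ∘ₗ (TensorProduct.homTensorHomMap (RingHom.id k) H H k k)
    ∘ₗ (TensorProduct.comm k (Module.Dual k H) (Module.Dual k H)).toLinearMap

/-- The Heisenberg-double-type multiplication on `H* ⊗ H`:
`(l ⊗ h)(l' ⊗ h') = Σ (l * (x ↦ l'(x · h₍₂₎))) ⊗ h₍₁₎ h'`. -/
noncomputable def heisMul :
    (Module.Dual k H ⊗[k] H) ⊗[k] (Module.Dual k H ⊗[k] H)
      →ₗ[k] Module.Dual k H ⊗[k] H :=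
  twistMul k (convMul k H) (LinearMap.mul' k H) (sigmaBi k H)

/-!
`heisMul` is the twisted tensor product of the algebras `(H*, *)` and `H` along `σ_bi`.
A twisted tensor product `Q ⊗_ξ P` of associative algebras is associative as soon as `ξ` is
compatible with both multiplications, `ξ(pp' ⊗ q) = (1 ⊗ p) · ξ(p' ⊗ q)` and
`ξ(p ⊗ qq') = ξ(p ⊗ q) · (q' ⊗ 1)`: left multiplication by `q ⊗ p` factors as
`(q ⊗ 1) · ((1 ⊗ p) · -)`, and the two conditions say how these operators compose.
For `σ_bi` the first condition is multiplicativity of `Δ`; the second says that `H*` is an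
`H^cop`-module algebra under `(h ▷ l)(x) = l(x h)`, combined with coassociativity.
The product on `H*` is the opposite of the convolution product on `Hom(H, k)`, which gives its
associativity and unit.
-/

section TwistedTensorProduct

variable {P Q : Type*} [AddCommGroup P] [Module k P] [AddCommGroup Q] [Module k Q]
  (μQ : Q ⊗[k] Q →ₗ[k] Q) (μP : P ⊗[k] P →ₗ[k] P) (ξ : P ⊗[k] Q →ₗ[k] Q ⊗[k] P)

/- Multiplication in `Q ⊗_ξ P` by `q ⊗ 1` and by `1 ⊗ p` from the left, and by `1 ⊗ p` and by
`q ⊗ 1` from the right; no unit is assumed. -/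

noncomputable def leftMulQ (q : Q) : Q ⊗[k] P →ₗ[k] Q ⊗[k] P :=
  μQ.rTensor P ∘ₗ (TensorProduct.assoc k Q Q P).symm.toLinearMap ∘ₗ TensorProduct.mk k Q _ q

noncomputable def leftMulP (p : P) : Q ⊗[k] P →ₗ[k] Q ⊗[k] P :=
  μP.lTensor Q ∘ₗ (TensorProduct.assoc k Q P P).toLinearMap ∘ₗ ξ.rTensor P
    ∘ₗ (TensorProduct.assoc k P Q P).symm.toLinearMap ∘ₗ TensorProduct.mk k P _ p

noncomputable def rightMulP (p : P) : Q ⊗[k] P →ₗ[k] Q ⊗[k] P :=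
  (μP ∘ₗ (TensorProduct.mk k P P).flip p).lTensor Q

noncomputable def rightMulQ (q : Q) : Q ⊗[k] P →ₗ[k] Q ⊗[k] P :=
  μQ.rTensor P ∘ₗ (TensorProduct.assoc k Q Q P).symm.toLinearMap ∘ₗ ξ.lTensor Q
    ∘ₗ (TensorProduct.assoc k Q P Q).toLinearMap ∘ₗ (TensorProduct.mk k _ Q).flip q

@[simp] lemma leftMulQ_tmul (q q' : Q) (p : P) :
    leftMulQ k μQ q (q' ⊗ₜ p) = μQ (q ⊗ₜ q') ⊗ₜ p := rfl

@[simp] lemma rightMulP_tmul (p p' : P) (q : Q) :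
    rightMulP k μP p (q ⊗ₜ p') = q ⊗ₜ μP (p' ⊗ₜ p) := rfl

lemma leftMulP_tmul (p p' : P) (q : Q) :
    leftMulP k μP ξ p (q ⊗ₜ p') = rightMulP k μP p' (ξ (p ⊗ₜ q)) := by
  simp only [leftMulP, LinearMap.comp_apply, TensorProduct.mk_apply, LinearEquiv.coe_coe,
    TensorProduct.assoc_symm_tmul, LinearMap.rTensor_tmul]
  induction ξ (p ⊗ₜ q) using TensorProduct.induction_on with
  | zero => simp
  | tmul q₁ p₁ => rfl
  | add w₁ w₂ h₁ h₂ => simp only [TensorProduct.add_tmul, map_add, h₁, h₂]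

lemma rightMulQ_tmul (q q' : Q) (p : P) :
    rightMulQ k μQ ξ q (q' ⊗ₜ p) = leftMulQ k μQ q' (ξ (p ⊗ₜ q)) := rfl

lemma twistMul_tmul_left_s13 (q : Q) (p : P) (z : Q ⊗[k] P) :
    twistMul k μQ μP ξ ((q ⊗ₜ p) ⊗ₜ z) = leftMulQ k μQ q (leftMulP k μP ξ p z) := rfl

lemma leftMulQ_comp_rightMulP (q : Q) (p : P) :
    leftMulQ k μQ q ∘ₗ rightMulP k μP p = rightMulP k μP p ∘ₗ leftMulQ k μQ q := by
  ext; rfl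

lemma leftMulQ_comp_leftMulQ (hμQ : ∀ a b c, μQ (μQ (a ⊗ₜ b) ⊗ₜ c) = μQ (a ⊗ₜ μQ (b ⊗ₜ c)))
    (q q' : Q) :
    leftMulQ k μQ q ∘ₗ leftMulQ (P := P) k μQ q' = leftMulQ k μQ (μQ (q ⊗ₜ q')) := by
  ext; simp [hμQ]

lemma leftMulP_comp_rightMulP (hμP : ∀ a b c, μP (μP (a ⊗ₜ b) ⊗ₜ c) = μP (a ⊗ₜ μP (b ⊗ₜ c)))
    (p p' : P) :
    leftMulP k μP ξ p ∘ₗ rightMulP k μP p' = rightMulP k μP p' ∘ₗ leftMulP k μP ξ p := by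
  refine TensorProduct.ext' fun q p'' => ?_
  simp only [LinearMap.comp_apply, rightMulP_tmul, leftMulP_tmul]
  induction ξ (p ⊗ₜ q) using TensorProduct.induction_on with
  | zero => simp
  | tmul q₁ p₁ => simp [hμP]
  | add w₁ w₂ h₁ h₂ => simp only [map_add, h₁, h₂]

lemma leftMulP_comp_leftMulP
    (hμP : ∀ a b c, μP (μP (a ⊗ₜ b) ⊗ₜ c) = μP (a ⊗ₜ μP (b ⊗ₜ c)))
    (hξP : ∀ p p' q, ξ (μP (p ⊗ₜ p') ⊗ₜ q) = leftMulP k μP ξ p (ξ (p' ⊗ₜ q))) (p p' : P) :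
    leftMulP k μP ξ p ∘ₗ leftMulP k μP ξ p' = leftMulP k μP ξ (μP (p ⊗ₜ p')) := by
  refine TensorProduct.ext' fun q p'' => ?_
  simp only [LinearMap.comp_apply, leftMulP_tmul, hξP]
  exact LinearMap.congr_fun (leftMulP_comp_rightMulP k μP ξ hμP p p'') _

lemma leftMulP_leftMulQ
    (hξQ : ∀ p q q', ξ (p ⊗ₜ μQ (q ⊗ₜ q')) = rightMulQ k μQ ξ q' (ξ (p ⊗ₜ q)))
    (p : P) (q : Q) (z : Q ⊗[k] P) :
    leftMulP k μP ξ p (leftMulQ k μQ q z) = twistMul k μQ μP ξ (ξ (p ⊗ₜ q) ⊗ₜ z) := by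
  induction z using TensorProduct.induction_on with
  | zero => simp
  | tmul q' p' =>
    rw [leftMulQ_tmul, leftMulP_tmul, hξQ]
    induction ξ (p ⊗ₜ q) using TensorProduct.induction_on with
    | zero => simp
    | tmul q₁ p₁ =>
      rw [rightMulQ_tmul, twistMul_tmul_left_s13, leftMulP_tmul]
      exact LinearMap.congr_fun (leftMulQ_comp_rightMulP k μQ μP q₁ p').symm _
    | add w₁ w₂ h₁ h₂ => simp only [map_add, TensorProduct.add_tmul, h₁, h₂]
  | add z₁ z₂ h₁ h₂ => simp only [map_add, TensorProduct.tmul_add, h₁, h₂]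

lemma twistMul_leftMulQ_rightMulP
    (hμQ : ∀ a b c, μQ (μQ (a ⊗ₜ b) ⊗ₜ c) = μQ (a ⊗ₜ μQ (b ⊗ₜ c)))
    (hμP : ∀ a b c, μP (μP (a ⊗ₜ b) ⊗ₜ c) = μP (a ⊗ₜ μP (b ⊗ₜ c)))
    (hξP : ∀ p p' q, ξ (μP (p ⊗ₜ p') ⊗ₜ q) = leftMulP k μP ξ p (ξ (p' ⊗ₜ q)))
    (q : Q) (p : P) (w z : Q ⊗[k] P) :
    twistMul k μQ μP ξ (leftMulQ k μQ q (rightMulP k μP p w) ⊗ₜ z)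
      = leftMulQ k μQ q (twistMul k μQ μP ξ (w ⊗ₜ leftMulP k μP ξ p z)) := by
  induction w using TensorProduct.induction_on with
  | zero => simp
  | tmul q₁ p₁ =>
    rw [rightMulP_tmul, leftMulQ_tmul, twistMul_tmul_left_s13, twistMul_tmul_left_s13,
      ← leftMulQ_comp_leftMulQ k μQ hμQ, ← leftMulP_comp_leftMulP k μP ξ hμP hξP]
    rfl
  | add w₁ w₂ h₁ h₂ => simp only [map_add, TensorProduct.add_tmul, h₁, h₂]

theorem twistMul_assoc
    (hμQ : ∀ a b c, μQ (μQ (a ⊗ₜ b) ⊗ₜ c) = μQ (a ⊗ₜ μQ (b ⊗ₜ c)))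
    (hμP : ∀ a b c, μP (μP (a ⊗ₜ b) ⊗ₜ c) = μP (a ⊗ₜ μP (b ⊗ₜ c)))
    (hξP : ∀ p p' q, ξ (μP (p ⊗ₜ p') ⊗ₜ q) = leftMulP k μP ξ p (ξ (p' ⊗ₜ q)))
    (hξQ : ∀ p q q', ξ (p ⊗ₜ μQ (q ⊗ₜ q')) = rightMulQ k μQ ξ q' (ξ (p ⊗ₜ q)))
    (x y z : Q ⊗[k] P) :
    twistMul k μQ μP ξ (twistMul k μQ μP ξ (x ⊗ₜ y) ⊗ₜ z)
      = twistMul k μQ μP ξ (x ⊗ₜ twistMul k μQ μP ξ (y ⊗ₜ z)) := by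
  induction x using TensorProduct.induction_on with
  | zero => simp
  | tmul q p =>
    induction y using TensorProduct.induction_on with
    | zero => simp
    | tmul q' p' =>
      rw [twistMul_tmul_left_s13, twistMul_tmul_left_s13, twistMul_tmul_left_s13, leftMulP_tmul,
        leftMulP_leftMulQ k μQ μP ξ hξQ]
      exact twistMul_leftMulQ_rightMulP k μQ μP ξ hμQ hμP hξP q p' _ z
    | add y₁ y₂ h₁ h₂ =>
      simp only [map_add, TensorProduct.add_tmul, TensorProduct.tmul_add, h₁, h₂]
  | add x₁ x₂ h₁ h₂ => simp only [map_add, TensorProduct.add_tmul, h₁, h₂]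

lemma twistMul_one_left (eQ : Q) (eP : P) (hμQ : ∀ q, μQ (eQ ⊗ₜ q) = q)
    (hμP : ∀ p, μP (eP ⊗ₜ p) = p) (hξ : ∀ q, ξ (eP ⊗ₜ q) = q ⊗ₜ eP) (z : Q ⊗[k] P) :
    twistMul k μQ μP ξ ((eQ ⊗ₜ eP) ⊗ₜ z) = z := by
  induction z using TensorProduct.induction_on with
  | zero => simp
  | tmul q p => simp [twistMul_tmul_left_s13, leftMulP_tmul, hμQ, hμP, hξ]
  | add z₁ z₂ h₁ h₂ => simp only [TensorProduct.tmul_add, map_add, h₁, h₂]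

lemma twistMul_one_right (eQ : Q) (eP : P) (hμQ : ∀ q, μQ (q ⊗ₜ eQ) = q)
    (hμP : ∀ p, μP (p ⊗ₜ eP) = p) (hξ : ∀ p, ξ (p ⊗ₜ eQ) = eQ ⊗ₜ p) (z : Q ⊗[k] P) :
    twistMul k μQ μP ξ (z ⊗ₜ (eQ ⊗ₜ eP)) = z := by
  induction z using TensorProduct.induction_on with
  | zero => simp
  | tmul q p => simp [twistMul_tmul_left_s13, leftMulP_tmul, hμQ, hμP, hξ]
  | add z₁ z₂ h₁ h₂ => simp only [TensorProduct.add_tmul, map_add, h₁, h₂]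

end TwistedTensorProduct

section HeisenbergDouble

open Coalgebra

lemma convMul_tmul (l l' : Module.Dual k H) :
    convMul k H (l ⊗ₜ l') = (WithConv.toConv l' * WithConv.toConv l).ofConv := rfl

lemma toConv_counit : WithConv.toConv (counit : Module.Dual k H) = 1 := by
  ext; simp

lemma convMul_assoc (a b c : Module.Dual k H) :
    convMul k H (convMul k H (a ⊗ₜ b) ⊗ₜ c) = convMul k H (a ⊗ₜ convMul k H (b ⊗ₜ c)) := by
  simp only [convMul_tmul, WithConv.toConv_ofConv, mul_assoc]

lemma convMul_counit_tmul (l : Module.Dual k H) : convMul k H (counit ⊗ₜ l) = l := by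
  simp only [convMul_tmul, toConv_counit, mul_one, WithConv.ofConv_toConv]

lemma convMul_tmul_counit (l : Module.Dual k H) : convMul k H (l ⊗ₜ counit) = l := by
  simp only [convMul_tmul, toConv_counit, one_mul, WithConv.ofConv_toConv]

@[simp] lemma rightMulDual_tmul_apply (h : H) (l : Module.Dual k H) (x : H) :
    rightMulDual k H (h ⊗ₜ l) x = l (x * h) := rfl

lemma rightMulDual_one_tmul (l : Module.Dual k H) : rightMulDual k H (1 ⊗ₜ l) = l := by
  ext; simp

lemma rightMulDual_mul_tmul (h h' : H) (l : Module.Dual k H) :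
    rightMulDual k H (h ⊗ₜ rightMulDual k H (h' ⊗ₜ l)) = rightMulDual k H ((h * h') ⊗ₜ l) := by
  ext; simp [mul_assoc]

lemma rightMulDual_tmul_counit (h : H) :
    rightMulDual k H (h ⊗ₜ counit) = counit (R := k) h • (counit : Module.Dual k H) := by
  ext; simp [mul_comm]

lemma rightMulDual_convMul_eq_sum {ι : Type*} {b : H} (𝓡 : Repr k b ι)
    (l l' : Module.Dual k H) :
    rightMulDual k H (b ⊗ₜ convMul k H (l ⊗ₜ l'))
      = ∑ i ∈ 𝓡.index, convMul k H
          (rightMulDual k H (𝓡.right i ⊗ₜ l) ⊗ₜ rightMulDual k H (𝓡.left i ⊗ₜ l')) := by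
  ext x
  simp [convMul_tmul, ← (ℛ k x).eq, ← 𝓡.eq, Finset.sum_mul, Finset.mul_sum,
    Algebra.TensorProduct.tmul_mul_tmul, map_sum]

lemma sigmaBi_tmul_eq_sum {ι : Type*} {h : H} (𝓡 : Repr k h ι) (l : Module.Dual k H) :
    sigmaBi k H (h ⊗ₜ l) = ∑ i ∈ 𝓡.index, rightMulDual k H (𝓡.right i ⊗ₜ l) ⊗ₜ 𝓡.left i := by
  simp [sigmaBi, ← 𝓡.eq, TensorProduct.sum_tmul]

lemma sigmaBi_one_tmul (l : Module.Dual k H) : sigmaBi k H (1 ⊗ₜ l) = l ⊗ₜ 1 := by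
  simp [sigmaBi, Algebra.TensorProduct.one_def, rightMulDual_one_tmul]

lemma sigmaBi_tmul_counit (h : H) : sigmaBi k H (h ⊗ₜ counit) = counit ⊗ₜ h := by
  have counit_right := congr(TensorProduct.rid k H $(sum_tmul_counit_eq (ℛ k h)))
  simp only [map_sum, TensorProduct.rid_tmul, one_smul] at counit_right
  simp_rw [sigmaBi_tmul_eq_sum k H (ℛ k h), rightMulDual_tmul_counit, TensorProduct.smul_tmul,
    ← TensorProduct.tmul_sum, counit_right]

lemma sigmaBi_mul_tmul (h h' : H) (l : Module.Dual k H) :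
    sigmaBi k H (LinearMap.mul' k H (h ⊗ₜ h') ⊗ₜ l)
      = leftMulP k (LinearMap.mul' k H) (sigmaBi k H) h (sigmaBi k H (h' ⊗ₜ l)) := by
  rw [LinearMap.mul'_apply, sigmaBi_tmul_eq_sum k H ((ℛ k h).mul (ℛ k h')),
    sigmaBi_tmul_eq_sum k H (ℛ k h')]
  simp only [Repr.mul_index, Repr.mul_left, Repr.mul_right, Finset.sum_product, map_sum,
    leftMulP_tmul, sigmaBi_tmul_eq_sum k H (ℛ k h), rightMulDual_mul_tmul, rightMulP_tmul,
    LinearMap.mul'_apply]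
  exact Finset.sum_comm

lemma sigmaBi_tmul_convMul (h : H) (l l' : Module.Dual k H) :
    sigmaBi k H (h ⊗ₜ convMul k H (l ⊗ₜ l'))
      = rightMulQ k (convMul k H) (sigmaBi k H) l' (sigmaBi k H (h ⊗ₜ l)) := by
  -- `F (x ⊗ y ⊗ z) = (z ▷ l) * (y ▷ l') ⊗ x`, applied to coassociativity
  let F : H ⊗[k] (H ⊗[k] H) →ₗ[k] Module.Dual k H ⊗[k] H :=
    (TensorProduct.comm k H _).toLinearMap ∘ₗ LinearMap.lTensor H (convMul k H ∘ₗ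
      TensorProduct.map (rightMulDual k H ∘ₗ (TensorProduct.mk k H _).flip l)
        (rightMulDual k H ∘ₗ (TensorProduct.mk k H _).flip l')
      ∘ₗ (TensorProduct.comm k H H).toLinearMap)
  have coassoc := congr(F $(sum_tmul_tmul_eq (ℛ k h) (fun i => ℛ k ((ℛ k h).left i))
    (fun i => ℛ k ((ℛ k h).right i))))
  simp only [map_sum, F, LinearMap.comp_apply, LinearMap.lTensor_tmul, LinearEquiv.coe_coe,
    TensorProduct.comm_tmul, TensorProduct.map_tmul, TensorProduct.mk_apply,
    LinearMap.flip_apply] at coassoc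
  rw [sigmaBi_tmul_eq_sum k H (ℛ k h), sigmaBi_tmul_eq_sum k H (ℛ k h)]
  simp [rightMulQ_tmul, sigmaBi_tmul_eq_sum k H (ℛ k _),
    rightMulDual_convMul_eq_sum k H (ℛ k _), TensorProduct.sum_tmul, coassoc]

end HeisenbergDouble

/-- For a bialgebra `H`, the Heisenberg-double-type multiplication on `H* ⊗ H` is
associative with two-sided unit `ε ⊗ 1`. -/
theorem heisenberg_double_assoc_unital :
    (heisMul k H ∘ₗ (heisMul k H).rTensor (Module.Dual k H ⊗[k] H)
      = heisMul k H ∘ₗ (heisMul k H).lTensor (Module.Dual k H ⊗[k] H)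
        ∘ₗ (TensorProduct.assoc k (Module.Dual k H ⊗[k] H) (Module.Dual k H ⊗[k] H)
            (Module.Dual k H ⊗[k] H)).toLinearMap)
    ∧ (∀ z : Module.Dual k H ⊗[k] H,
        heisMul k H (((Coalgebra.counit (R := k) (A := H)) ⊗ₜ[k] (1 : H)) ⊗ₜ[k] z) = z)
    ∧ (∀ z : Module.Dual k H ⊗[k] H,
        heisMul k H (z ⊗ₜ[k] ((Coalgebra.counit (R := k) (A := H)) ⊗ₜ[k] (1 : H))) = z) := by
  refine ⟨TensorProduct.ext_threefold fun x y z => ?_,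
    twistMul_one_left k _ _ _ _ _ (convMul_counit_tmul k H) (by simp) (sigmaBi_one_tmul k H),
    twistMul_one_right k _ _ _ _ _ (convMul_tmul_counit k H) (by simp) (sigmaBi_tmul_counit k H)⟩
  exact twistMul_assoc k _ _ _ (convMul_assoc k H) (by simp [mul_assoc])
    (sigmaBi_mul_tmul k H) (sigmaBi_tmul_convMul k H) x y z
end
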